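/- For n ≥ 2, let e_1,…,e_n be an orthonormal basis of an n-dimensional complex Hilbert space H and let |φ⟩ = e_1 ∧ e_2 ∧ ⋯ ∧ e_n ∈ H^{⊗n} be the (unit) antisymmetrized basis tensor. For i ∈ {1,…,n} and k ∈ {1,…,n}, let |k⟩_i|φ⟩_{ī} ∈ H^{⊗(n+1)} denote the vector having e_k in the i-th tensor factor and the n factors of |φ⟩ distributed in order over the remaining n factors. Then for i ≠ j, the inner product ⟨ (e_k)_i, φ_{ī} | (e_l)_j, φ_{j̄} ⟩ = (−1)^{i−j+1} · δ_{k,l} / n, while for i = j it equals δ_{k,l}. -/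

import Mathlib

open scoped BigOperators ComplexOrder ComplexInnerProductSpace

noncomputable section

/-- `H`, a model of an `m`-dimensional complex Hilbert space. -/
abbrev Hsp (m : ℕ) : Type := EuclideanSpace ℂ (Fin m)
/-- `H^{⊗n}`, a model of the `n`-fold tensor power of `H`. -/
abbrev Tpow (m n : ℕ) : Type := EuclideanSpace ℂ (Fin n → Fin m)

/-- The product vector `φ₁ ⊗ ⋯ ⊗ φₙ` in `H^{⊗n}`. -/
def prodVec {m n : ℕ} (φ : Fin n → Hsp m) : Tpow m n :=
  WithLp.toLp 2 (fun ω => ∏ i, φ i (ω i))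

/-- The antisymmetric tensor product
`φ₁ ∧ ⋯ ∧ φₙ = (1/√(n!)) Σ_{σ ∈ Sₙ} sgn(σ) φ_{σ(1)} ⊗ ⋯ ⊗ φ_{σ(n)}`. -/
def wedge {m n : ℕ} (φ : Fin n → Hsp m) : Tpow m n :=
  ((Real.sqrt n.factorial : ℂ))⁻¹ •
    ∑ σ : Equiv.Perm (Fin n), ((Equiv.Perm.sign σ : ℤ) : ℂ) • prodVec (fun i => φ (σ i))

/-- The antisymmetric subspace `∧ⁿ H` of `H^{⊗n}`: the span of all antisymmetric
tensor products. -/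
def antisymSub (m n : ℕ) : Submodule ℂ (Tpow m n) :=
  Submodule.span ℂ (Set.range (fun φ : Fin n → Hsp m => wedge φ))

/-- The orthogonal projector `Φ(n)` of `H^{⊗n}` onto the antisymmetric subspace `∧ⁿ H`. -/
def asProj (m n : ℕ) : Tpow m n →L[ℂ] Tpow m n :=
  (antisymSub m n).subtypeL.comp ((antisymSub m n).orthogonalProjectionOnto)

/-- The vector of `H^{⊗(n+1)}` having `x` in tensor slot `p` and the vector
`v ∈ H^{⊗n}` distributed in order over the remaining `n` slots. -/
def embedAt {m n : ℕ} (p : Fin (n+1)) (x : Hsp m) (v : Tpow m n) : Tpow m (n+1) :=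
  WithLp.toLp 2 (fun ω => x (ω p) * v (fun j => ω (p.succAbove j)))

/-!
Expanding both wedges and using orthonormality, the inner product is `1/n!` times a signed count
of pairs of permutations `(σ, τ)` for which inserting `k` into the word `σ` at slot `i` gives the
same word as inserting `l` into `τ` at slot `j`. For `i = j` this forces `k = l` and `σ = τ`.
For `i ≠ j`, the word `f` obtained from `σ` repeats exactly one letter, `k`, at slot `i` and at one
other slot; removing slot `j` must leave a permutation, so that other slot is `j`, `l = k`, and
`τ = σ * π` for a relabelling `π` of the slots, independent of `σ`, of sign `(-1)^(i+j+1)`.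
Exactly `(n-1)!` permutations `σ` put `k` at the required slot.
-/

open Finset Equiv Equiv.Perm

theorem Equiv.Perm.decomposeFin_fst {N : ℕ} (σ : Perm (Fin (N + 1))) :
    (decomposeFin σ).1 = σ 0 := by
  obtain ⟨⟨a, e⟩, rfl⟩ := decomposeFin.symm.surjective σ
  simp [decomposeFin_symm_apply_zero]

theorem Fin.exists_perm_succAbove_eq {N : ℕ} (ρ : Perm (Fin (N + 1))) {p q : Fin (N + 1)}
    (h : ρ q = p) :
    ∃ π : Perm (Fin N), (∀ t, p.succAbove (π t) = ρ (q.succAbove t)) ∧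
      sign π = (-1) ^ ((p : ℕ) + q) * sign ρ := by
  -- `π` is the restriction to `Fin.succ` of this permutation fixing `0`.
  set D := p.cycleRange * ρ * q.cycleRange⁻¹
  have hD : decomposeFin.symm (0, (decomposeFin D).2) = D := by
    have hD0 : (decomposeFin D).1 = 0 := by simp [decomposeFin_fst, D, h]
    rw [← hD0, Prod.mk.eta, Equiv.symm_apply_apply]
  refine ⟨(decomposeFin D).2, fun t => ?_, ?_⟩
  · simpa [D, decomposeFin_symm_apply_succ] using
      congrArg p.cycleRange.symm (DFunLike.congr_fun hD t.succ)
  · have := congrArg sign hD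
    simp only [decomposeFin.symm_sign, D, Perm.sign_mul, sign_inv, Fin.sign_cycleRange, if_true,
      one_mul] at this
    rw [this, pow_add, mul_right_comm]

theorem Equiv.Perm.card_filter_apply_eq {M : ℕ} (a b : Fin (M + 1)) :
    #{σ : Perm (Fin (M + 1)) | σ a = b} = M.factorial := by
  calc #{σ : Perm (Fin (M + 1)) | σ a = b}
      = #{σ : Perm (Fin (M + 1)) | σ 0 = b} := by
        refine card_nbij' (· * swap 0 a) (· * swap 0 a) ?_ ?_ ?_ ?_ <;> intro σ <;> simp
    _ = #{x : Fin (M + 1) × Perm (Fin M) | x.1 = b} :=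
        card_equiv decomposeFin fun σ => by simp [decomposeFin_fst]
    _ = #({b} ×ˢ univ : Finset (Fin (M + 1) × Perm (Fin M))) := by
        congr 1; ext ⟨c, e⟩; simp [eq_comm]
    _ = M.factorial := by simp [Fintype.card_perm]

theorem Fin.insertNth_perm_eq_insertNth_perm_iff {N : ℕ} {p q : Fin (N + 1)} (hpq : p ≠ q)
    {π : Perm (Fin N)} (hπ : ∀ t, p.succAbove (π t) = swap p q (q.succAbove t))
    {k l : Fin N} {σ τ : Perm (Fin N)} :
    (p.insertNth k σ : _ → Fin N) = q.insertNth l τ ↔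
      k = l ∧ (p.insertNth k σ : _ → Fin N) q = k ∧ τ = σ * π := by
  set f : Fin (N + 1) → Fin N := p.insertNth k σ
  have hfp : f p = k := Fin.insertNth_apply_same _ _ _
  have hfs (u : Fin N) : f (p.succAbove u) = σ u := Fin.insertNth_apply_succAbove _ _ _ _
  have hf_comp (hq : f q = k) (t : Fin N) : f (q.succAbove t) = σ (π t) := by
    rw [← Equiv.apply_swap_eq_self (hfp.trans hq.symm), ← hπ, hfs]
  -- `f` takes the value `k` at `p` and at `p.succAbove (σ⁻¹ k)`, and is injective off `q`.
  have hq_of_inj (hτ : ∀ t, f (q.succAbove t) = τ t) : f q = k := by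
    obtain ⟨u, rfl⟩ := σ.surjective k
    by_contra hne
    have hx : p.succAbove u ≠ q := fun hx => hne (by rw [← hx, hfs])
    obtain ⟨v, hv⟩ := Fin.exists_succAbove_eq hx
    obtain ⟨w, hw⟩ := Fin.exists_succAbove_eq hpq
    have hvw : v = w := τ.injective (by rw [← hτ, ← hτ, hv, hw, hfp, hfs])
    exact Fin.succAbove_ne p u (by rw [← hv, ← hw, hvw])
  rw [Fin.eq_insertNth_iff]
  constructor
  · rintro ⟨hl, hτ⟩
    have hτ' : ∀ t, f (q.succAbove t) = τ t := fun t => congrFun hτ t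
    have hk := hq_of_inj hτ'
    exact ⟨hk.symm.trans hl, hk, Equiv.ext fun t => by rw [← hτ', hf_comp hk]; rfl⟩
  · rintro ⟨rfl, hk, rfl⟩
    exact ⟨hk, funext fun t => hf_comp hk t⟩

def insertNthOverlap {N : ℕ} (p q : Fin (N + 1)) (k l : Fin N) : ℤ :=
  ∑ σ : Perm (Fin N), ∑ τ : Perm (Fin N),
    if (p.insertNth k σ : _ → Fin N) = q.insertNth l τ then ((sign σ * sign τ : ℤˣ) : ℤ) else 0

theorem insertNthOverlap_self {N : ℕ} (p : Fin (N + 1)) (k l : Fin N) :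
    insertNthOverlap p p k l = if k = l then (N.factorial : ℤ) else 0 := by
  simp [insertNthOverlap, ite_and, Finset.sum_ite_irrel, Fintype.card_perm]

theorem insertNthOverlap_of_ne {M : ℕ} {p q : Fin (M + 2)} (hpq : p ≠ q) (k l : Fin (M + 1)) :
    insertNthOverlap p q k l =
      if k = l then (-1) ^ ((p : ℕ) + q + 1) * (M.factorial : ℤ) else 0 := by
  obtain ⟨π, hπ, hsign⟩ := Fin.exists_perm_succAbove_eq (swap p q) (swap_apply_right p q)
  obtain ⟨t₀, ht₀⟩ := Fin.exists_succAbove_eq hpq.symm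
  simp only [insertNthOverlap, Fin.insertNth_perm_eq_insertNth_perm_iff hpq hπ]
  split_ifs with hkl
  · simp [hkl, ← ht₀, ite_and, Finset.sum_ite_irrel, ← Finset.sum_filter, ← mul_assoc,
      Int.units_coe_mul_self, Equiv.Perm.card_filter_apply_eq, hsign]
    ring
  · simp [hkl]

theorem inner_prodVec {m N : ℕ} (φ ψ : Fin N → Hsp m) :
    ⟪prodVec φ, prodVec ψ⟫ = ∏ i, ⟪φ i, ψ i⟫ := by
  simp only [prodVec, PiLp.inner_apply, RCLike.inner_apply, Finset.prod_univ_sum,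
    Fintype.piFinset_univ, map_prod, ← Finset.prod_mul_distrib]

theorem Orthonormal.inner_prodVec_comp {m N : ℕ} {ι : Type*} [DecidableEq ι] {e : ι → Hsp m}
    (he : Orthonormal ℂ e) (f g : Fin N → ι) :
    ⟪prodVec (e ∘ f), prodVec (e ∘ g)⟫ = if f = g then 1 else 0 := by
  simp [inner_prodVec, orthonormal_iff_ite.mp he, Finset.prod_boole, funext_iff]

theorem Fin.comp_insertNth {N : ℕ} {α β : Type*} (g : α → β) (p : Fin (N + 1)) (x : α)
    (f : Fin N → α) : g ∘ (p.insertNth x f : _ → α) = p.insertNth (g x) (g ∘ f) := by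
  ext r
  cases r using Fin.succAboveCases p <;> simp

theorem embedAt_prodVec {m N : ℕ} (p : Fin (N + 1)) (x : Hsp m) (φ : Fin N → Hsp m) :
    embedAt p x (prodVec φ) = prodVec (p.insertNth x φ) := by
  ext ω
  simp [embedAt, prodVec, Fin.prod_univ_succAbove _ p]

def embedAtₗ {m N : ℕ} (p : Fin (N + 1)) (x : Hsp m) : Tpow m N →ₗ[ℂ] Tpow m (N + 1) where
  toFun := embedAt p x
  map_add' v w := by ext ω; simp [embedAt, mul_add]
  map_smul' c v := by ext ω; simp [embedAt, mul_left_comm]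

theorem embedAt_wedge {m N : ℕ} (p : Fin (N + 1)) (x : Hsp m) (φ : Fin N → Hsp m) :
    embedAt p x (wedge φ) = (Real.sqrt N.factorial : ℂ)⁻¹ •
      ∑ σ : Perm (Fin N), ((sign σ : ℤ) : ℂ) • prodVec (p.insertNth x (φ ∘ σ)) := by
  change embedAtₗ p x _ = _
  simp only [wedge, map_smul, map_sum]
  congr! 3 with σ
  exact embedAt_prodVec p x _

theorem inner_embedAt_wedge {m N : ℕ} {e : Fin N → Hsp m} (he : Orthonormal ℂ e)
    (p q : Fin (N + 1)) (k l : Fin N) :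
    ⟪embedAt p (e k) (wedge e), embedAt q (e l) (wedge e)⟫
      = (N.factorial : ℂ)⁻¹ * insertNthOverlap p q k l := by
  simp only [embedAt_wedge, ← Fin.comp_insertNth, inner_smul_left, inner_smul_right, sum_inner,
    inner_sum, he.inner_prodVec_comp]
  have hnorm : (Real.sqrt N.factorial : ℂ)⁻¹ * (Real.sqrt N.factorial : ℂ)⁻¹
      = (N.factorial : ℂ)⁻¹ := by
    rw [← mul_inv, ← Complex.ofReal_mul, Real.mul_self_sqrt (by positivity)]
    push_cast; rfl
  rw [insertNthOverlap, Finset.sum_comm]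
  push_cast
  simp only [map_inv₀, Complex.conj_ofReal, map_intCast, Finset.mul_sum, ← hnorm]
  refine Finset.sum_congr rfl fun σ _ => Finset.sum_congr rfl fun τ _ => ?_
  split_ifs <;> ring

theorem inner_embed_wedge_basis_general
    (n : ℕ) (e : Fin n → Hsp n) (he : Orthonormal ℂ e)
    (i j : Fin n) (k l : Fin n) :
    ⟪embedAt i.castSucc (e k) (wedge e), embedAt j.castSucc (e l) (wedge e)⟫
      = if i = j then (if k = l then (1 : ℂ) else 0)
        else (-1 : ℂ) ^ (i.val + j.val + 1) * (if k = l then (1 : ℂ) else 0) / n := by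
  obtain ⟨M, rfl⟩ := Nat.exists_eq_add_one_of_ne_zero i.pos.ne'
  rw [inner_embedAt_wedge he]
  by_cases hij : i = j
  · subst hij
    rw [insertNthOverlap_self, if_pos rfl]
    split_ifs <;> simp [Nat.factorial_ne_zero]
  · rw [insertNthOverlap_of_ne (Fin.castSucc_injective _ |>.ne hij), if_neg hij]
    split_ifs
    · push_cast [Nat.factorial_succ, Fin.val_castSucc]
      field_simp
    · simp

theorem inner_embed_wedge_basis
    (n : ℕ) (hn : 2 ≤ n) (e : Fin n → Hsp n) (he : Orthonormal ℂ e)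
    (i j : Fin n) (k l : Fin n) :
    ⟪embedAt i.castSucc (e k) (wedge e), embedAt j.castSucc (e l) (wedge e)⟫
      = if i = j then (if k = l then (1 : ℂ) else 0)
        else (-1 : ℂ) ^ (i.val + j.val + 1) * (if k = l then (1 : ℂ) else 0) / n :=
  inner_embed_wedge_basis_general n e he i j k l
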